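/- Let (X,d) be an ultra-metric space of diameter ≤ 1, extend d to X̄ = X ∪ X⁻¹ ∪ {e} by d(x⁻¹,y⁻¹) = d(x,y) and d(x⁻¹,y) = d(x,y⁻¹) = d(x,e) = d(x⁻¹,e) = 1 for all x,y ∈ X, and let δ_u be the associated Graev ultra-metric on F(X). Then δ_u(v,w) ≤ d̂(v,w) for all v,w ∈ F(X). -/

import Mathlib

/-! Graev ultra-metrics on free groups (after Gao, Savchenko–Zarichnyi and
Shlossberg, "On Graev type ultra-metrics"). -/

namespace GraevStmt

variable {X : Type*}

/-- The alphabet `X̄ = X ∪ X⁻¹ ∪ {e}`: `none` is the letter `e`,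
`some (x, true)` is the letter `x` and `some (x, false)` is the letter `x⁻¹`. -/
abbrev Letter (X : Type*) := Option (X × Bool)

/-- The letter `e`. -/
def eL : Letter X := none

/-- The letter `x`, for `x ∈ X`. -/
def pos (x : X) : Letter X := some (x, true)

/-- The letter `x⁻¹`, for `x ∈ X`. -/
def neg (x : X) : Letter X := some (x, false)

/-- The formal inverse of a letter; `e⁻¹ = e` and `(x⁻¹)⁻¹ = x`. -/
def linv : Letter X → Letter X
  | none => none
  | some (x, b) => some (x, !b)

/-- Interpretation of a letter as an element of the free group `F(X)`. -/
def toF : Letter X → FreeGroup X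
  | none => 1
  | some (x, b) => FreeGroup.mk [(x, b)]

/-- The reduced word of a word `w ∈ W(X)` over the alphabet `X̄`, viewed as the
corresponding element of the free group `F(X)`. -/
def red (w : List (Letter X)) : FreeGroup X := (w.map toF).prod

/-- The canonical irreducible word over the alphabet `X̄` representing a given
element of the free group `F(X)`. -/
def wordOf [DecidableEq X] (w : FreeGroup X) : List (Letter X) :=
  w.toWord.map some

/-- `ρ_u(w, v)`: the maximum of the distances between corresponding letters of
two words of equal length. -/
def rho (d : Letter X → Letter X → ℝ) (w v : List (Letter X)) : ℝ :=
  (List.zipWith d w v).foldr max 0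

/-- The Graev ultra-metric `δ_u` on `F(X)` associated with `d`:
`δ_u(w, v) = inf {ρ_u(w*, v*) : lh(w*) = lh(v*), (w*)' = w, (v*)' = v}`. -/
noncomputable def graev (d : Letter X → Letter X → ℝ) (w v : FreeGroup X) : ℝ :=
  sInf {r : ℝ | ∃ w' v' : List (Letter X), w'.length = v'.length ∧
    red w' = w ∧ red v' = v ∧ r = rho d w' v'}

/-- `d` is an ultra-metric: symmetric, vanishing exactly on the diagonal and
satisfying the strong triangle inequality. -/
def IsUltraMetric {A : Type*} (d : A → A → ℝ) : Prop :=
  (∀ a b, d a b = d b a) ∧ (∀ a b, d a b = 0 ↔ a = b) ∧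
    ∀ a b c, d a c ≤ max (d a b) (d b c)

/-- An admissible ultra-metric on the alphabet `X̄`, i.e. an ultra-metric with
`d(x⁻¹, y⁻¹) = d(x, y)`, `d(x, e) = d(x⁻¹, e)` and `d(x⁻¹, y) = d(x, y⁻¹)`. -/
def IsAdmissible (d : Letter X → Letter X → ℝ) : Prop :=
  IsUltraMetric d ∧ (∀ x y : X, d (neg x) (neg y) = d (pos x) (pos y)) ∧
    (∀ x : X, d (pos x) eL = d (neg x) eL) ∧
    ∀ x y : X, d (neg x) (pos y) = d (pos x) (neg y)

/-- A function `R` on `F(X) × F(X)` is (two-sided) invariant if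
`R(uwv, uw'v) = R(w, w')` for all `u, v, w, w'`. -/
def IsInvariant (R : FreeGroup X → FreeGroup X → ℝ) : Prop :=
  ∀ u v w w' : FreeGroup X, R (u * w * v) (u * w' * v) = R w w'

/-- A match on `{0, …, n-1}`: an involution `θ` such that there are no
`i < j < θ(i) < θ(j)`. -/
def IsMatch {n : ℕ} (θ : Fin n → Fin n) : Prop :=
  (∀ i, θ (θ i) = i) ∧ ∀ i j : Fin n, ¬(i < j ∧ j < θ i ∧ θ i < θ j)

/-- The word `w^θ` associated with a word `w` and a match `θ`:
its `i`-th letter is `x_i` if `θ(i) > i`, `e` if `θ(i) = i`, and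
`x_{θ(i)}⁻¹` if `θ(i) < i`. -/
def matchWord (w : List (Letter X)) (θ : Fin w.length → Fin w.length) :
    List (Letter X) :=
  List.ofFn fun i => if i < θ i then w.get i
    else if θ i = i then eL else linv (w.get (θ i))

/-- `j₂(x, y) = x⁻¹y`. -/
def j2 (p : X × X) : FreeGroup X := (FreeGroup.of p.1)⁻¹ * FreeGroup.of p.2

/-- `j₂*(x, y) = xy⁻¹`. -/
def j2s (p : X × X) : FreeGroup X := FreeGroup.of p.1 * (FreeGroup.of p.2)⁻¹

/-- `ε̃ = ⋃_{w ∈ F(X)} w (j₂(ε) ∪ j₂*(ε)) w⁻¹` for `ε ⊆ X × X`. -/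
def tilde (S : Set (X × X)) : Set (FreeGroup X) :=
  ⋃ w : FreeGroup X, (fun g => w * g * w⁻¹) '' (j2 '' S ∪ j2s '' S)

/-- The extension of an ultra-metric `d` on `X` to the alphabet `X̄` determined
by a base point `x₀`: `d(x, e) = max {d(x, x₀), 1}`, `d(x⁻¹, y⁻¹) = d(x, y)`
and `d(x⁻¹, y) = d(x, y⁻¹) = max {d(x, e), d(y, e)}` for `x, y ∈ X ∪ {e}`. -/
def ext (d : X → X → ℝ) (x₀ : X) : Letter X → Letter X → ℝ
  | none, none => 0
  | some (x, _), none => max (d x x₀) 1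
  | none, some (y, _) => max (d y x₀) 1
  | some (x, true), some (y, true) => d x y
  | some (x, false), some (y, false) => d x y
  | some (x, _), some (y, _) => max (max (d x x₀) 1) (max (d y x₀) 1)

/-- The extension of an ultra-metric `d` of diameter at most `1` on `X` to the
alphabet `X̄`, with `d(x⁻¹, y⁻¹) = d(x, y)` and
`d(x⁻¹, y) = d(x, y⁻¹) = d(x, e) = d(x⁻¹, e) = 1`. -/
def extOne (d : X → X → ℝ) : Letter X → Letter X → ℝ
  | none, none => 0
  | some (x, true), some (y, true) => d x y
  | some (x, false), some (y, false) => d x y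
  | _, _ => 1

/-- The homomorphism `α : F(X) → ℤ` extending the constant map `X → {1} ⊆ ℤ`. -/
def alpha (w : FreeGroup X) : ℤ :=
  Multiplicative.toAdd ((FreeGroup.lift fun _ : X => Multiplicative.ofAdd (1 : ℤ)) w)

/-- `F(q_r) : F(X) → F(X/F_r)`, where `X/F_r` is the quotient of `X` by the
partition into open balls of radius `r` (for an ultra-metric the relation
`d x y < r` is an equivalence relation, so `Quot` of this relation is exactly
this quotient) and `q_r` is the quotient map. -/
def Fq (d : X → X → ℝ) (r : ℝ) :
    FreeGroup X →* FreeGroup (Quot fun x y : X => d x y < r) :=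
  FreeGroup.map (Quot.mk _)

/-- The Savchenko–Zarichnyi function `d̂` on `F(X) × F(X)`:
`d̂(v, w) = 1` if `α(v) ≠ α(w)`, and
`d̂(v, w) = inf {r > 0 : F(q_r)(v) = F(q_r)(w)}` if `α(v) = α(w)`. -/
noncomputable def dHat (d : X → X → ℝ) (v w : FreeGroup X) : ℝ :=
  if alpha v = alpha w then sInf {r : ℝ | 0 < r ∧ Fq d r v = Fq d r w} else 1


section Aux
variable {X : Type*}

lemma aux_toF_linv (a : Letter X) : toF (linv a) = (toF a)⁻¹ := by
  rcases a with _ | ⟨x, b⟩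
  · simp [linv, toF]
  · simp [linv, toF, FreeGroup.inv_mk, FreeGroup.invRev]

lemma aux_red_cons (a : Letter X) (L : List (Letter X)) : red (a :: L) = toF a * red L := by
  simp [red]

lemma aux_red_append (L₁ L₂ : List (Letter X)) : red (L₁ ++ L₂) = red L₁ * red L₂ := by
  simp [red]

lemma aux_red_map_some (L : List (X × Bool)) : red (L.map some) = FreeGroup.mk L := by
  induction L with
  | nil => simp [red]; rfl
  | cons a t ih =>
    rw [List.map_cons, aux_red_cons, ih]
    show FreeGroup.mk [a] * FreeGroup.mk t = _
    rw [FreeGroup.mul_mk]; rfl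

lemma aux_red_inv (L : List (Letter X)) : red (L.reverse.map linv) = (red L)⁻¹ := by
  induction L with
  | nil => simp [red]
  | cons a t ih =>
    rw [List.reverse_cons, List.map_append, aux_red_append, ih, aux_red_cons]
    simp [aux_toF_linv, red]

lemma aux_red_eL {α : Type*} (L : List α) :
    red (L.map fun _ => (eL : Letter X)) = 1 := by
  induction L with
  | nil => simp [red]
  | cons a t ih => rw [List.map_cons, aux_red_cons, ih]; simp [toF, eL]

lemma aux_foldr_max_nonneg (l : List ℝ) : 0 ≤ l.foldr max 0 := by
  induction l with
  | nil => simp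
  | cons a t ih => exact le_trans ih (le_max_right _ _)

lemma aux_foldr_max_le {l : List ℝ} {r : ℝ} (h0 : 0 ≤ r) (h : ∀ x ∈ l, x ≤ r) :
    l.foldr max 0 ≤ r := by
  induction l with
  | nil => simpa
  | cons a t ih =>
    exact max_le (h a (by simp)) (ih fun x hx => h x (by simp [hx]))

lemma aux_zipWith_map_same {α β : Type*} (f : Letter X → Letter X → β)
    (g1 g2 : α → Letter X) :
    ∀ L : List α, List.zipWith f (L.map g1) (L.map g2) = L.map fun a => f (g1 a) (g2 a) := by
  intro L; induction L with
  | nil => simp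
  | cons a t ih => simp [ih]

lemma aux_bddBelow (d : Letter X → Letter X → ℝ) (v w : FreeGroup X) :
    BddBelow {s : ℝ | ∃ w' v' : List (Letter X), w'.length = v'.length ∧
      red w' = v ∧ red v' = w ∧ s = rho d w' v'} := by
  refine ⟨0, ?_⟩
  rintro s ⟨w', v', -, -, -, rfl⟩
  exact aux_foldr_max_nonneg _

lemma aux_key (d : X → X → ℝ) (hd : IsUltraMetric d) {r : ℝ} (hr : 0 < r)
    {v w : FreeGroup X} (h : Fq d r v = Fq d r w) : graev (extOne d) v w ≤ r := by
  classical
  have heq : Equivalence (fun x y : X => d x y < r) := by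
    refine ⟨fun x => ?_, fun {x y} hxy => ?_, fun {x y z} h1 h2 => ?_⟩
    · simpa [(hd.2.1 x x).mpr rfl] using hr
    · rwa [hd.1]
    · exact lt_of_le_of_lt (hd.2.2 x y z) (max_lt h1 h2)
  set h' : X → X := fun x => Quot.out (Quot.mk (fun x y : X => d x y < r) x) with hh'
  have hclose : ∀ x : X, d x (h' x) ≤ r := by
    intro x
    have h1 : Quot.mk (fun x y : X => d x y < r) (h' x)
        = Quot.mk (fun x y : X => d x y < r) x := Quot.out_eq _
    have h2 : d (h' x) x < r := heq.eqvGen_iff.mp (Quot.eq.mp h1)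
    rw [hd.1]; exact le_of_lt h2
  set hp : X × Bool → X × Bool := fun p => (h' p.1, p.2) with hhp
  have hz : ∀ u : FreeGroup X,
      FreeGroup.mk (u.toWord.map hp) = FreeGroup.map Quot.out (Fq d r u) := by
    intro u
    have h1 : Fq d r u = FreeGroup.mk
        (u.toWord.map fun p => (Quot.mk (fun x y : X => d x y < r) p.1, p.2)) := by
      conv_lhs => rw [show u = FreeGroup.mk u.toWord from (FreeGroup.mk_toWord).symm]
      exact FreeGroup.map.mk
    rw [h1, FreeGroup.map.mk, List.map_map]
    rfl
  have hzz : FreeGroup.mk (v.toWord.map hp) = FreeGroup.mk (w.toWord.map hp) := by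
    rw [hz, hz, h]
  set L1 := v.toWord with hL1
  set L2 := w.toWord with hL2
  set A : List (Letter X) := L1.map some with hA
  set B : List (Letter X) := L1.map (fun p => some (hp p)) with hB
  set C : List (Letter X) := L2.map some with hC
  set D : List (Letter X) := L2.map (fun p => some (hp p)) with hD
  set Cb : List (Letter X) := L2.reverse.map (fun p => linv (some p)) with hCb
  set Db : List (Letter X) := L2.reverse.map (fun p => linv (some (hp p))) with hDb
  have hBalt : B = (L1.map hp).map some := by rw [hB, List.map_map]; rfl
  have hDalt : D = (L2.map hp).map some := by rw [hD, List.map_map]; rfl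
  have hCbalt : Cb = C.reverse.map linv := by
    rw [hCb, hC, ← List.map_reverse, List.map_map]; rfl
  have hDbalt : Db = D.reverse.map linv := by
    simp [hDb, hDalt, Function.comp]
  have hredA : red A = v := by rw [hA, aux_red_map_some, hL1, FreeGroup.mk_toWord]
  have hredB : red B = FreeGroup.mk (L2.map hp) := by
    rw [hBalt, aux_red_map_some, hL1, hL2]; exact hzz
  have hredC : red C = w := by rw [hC, aux_red_map_some, hL2, FreeGroup.mk_toWord]
  have hredD : red D = FreeGroup.mk (L2.map hp) := by
    rw [hDalt, aux_red_map_some]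
  have hredv : red ((A ++ Cb) ++ C) = v := by
    rw [aux_red_append, aux_red_append, hredA, hredC, hCbalt, aux_red_inv, hredC]
    group
  have hredw : red ((B ++ Db) ++ C) = w := by
    rw [aux_red_append, aux_red_append, hredB, hredC, hDbalt, aux_red_inv, hredD]
    group
  have hlen : ((A ++ Cb) ++ C).length = ((B ++ Db) ++ C).length := by
    simp [hA, hB, hC, hCb, hDb]
  have hmem : rho (extOne d) ((A ++ Cb) ++ C) ((B ++ Db) ++ C) ∈
      {s : ℝ | ∃ w' v' : List (Letter X), w'.length = v'.length ∧
        red w' = v ∧ red v' = w ∧ s = rho (extOne d) w' v'} :=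
    ⟨(A ++ Cb) ++ C, (B ++ Db) ++ C, hlen, hredv, hredw, rfl⟩
  refine le_trans (csInf_le (aux_bddBelow _ _ _) hmem) ?_
  show (List.zipWith (extOne d) ((A ++ Cb) ++ C) ((B ++ Db) ++ C)).foldr max 0 ≤ r
  rw [List.zipWith_append (by simp [hA, hB, hCb, hDb]),
    List.zipWith_append (by simp [hA, hB])]
  refine aux_foldr_max_le (le_of_lt hr) ?_
  intro x hx
  simp only [List.mem_append] at hx
  rcases hx with (hx | hx) | hx
  · rw [hA, hB, aux_zipWith_map_same] at hx
    obtain ⟨⟨y, b⟩, -, rfl⟩ := List.mem_map.mp hx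
    cases b
    · exact hclose y
    · exact hclose y
  · rw [hCb, hDb, aux_zipWith_map_same] at hx
    obtain ⟨⟨y, b⟩, -, rfl⟩ := List.mem_map.mp hx
    cases b
    · exact hclose y
    · exact hclose y
  · rw [hC, aux_zipWith_map_same] at hx
    obtain ⟨⟨y, b⟩, -, rfl⟩ := List.mem_map.mp hx
    have h0 : d y y = 0 := (hd.2.1 y y).mpr rfl
    cases b
    · show d y y ≤ r; rw [h0]; exact le_of_lt hr
    · show d y y ≤ r; rw [h0]; exact le_of_lt hr

end Aux

/-- Lemma `leq`: for an ultra-metric space `(X, d)` of diameter at most `1`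
and the extension `extOne d` of `d` to `X̄`, the associated Graev
ultra-metric satisfies `δ_u(v, w) ≤ d̂(v, w)` for all `v, w ∈ F(X)`. -/
theorem graev_le_dHat {X : Type*} [Nonempty X]
    (d : X → X → ℝ) (hd : IsUltraMetric d) (hdiam : ∀ x y : X, d x y ≤ 1) :
    ∀ v w : FreeGroup X, graev (extOne d) v w ≤ dHat d v w := by
  classical
  intro v w
  by_cases hα : alpha v = alpha w
  · rw [dHat, if_pos hα]
    have h2 : Fq d 2 v = Fq d 2 w := by
      set q0 : Quot (fun x y : X => d x y < 2) :=
        Quot.mk _ (Classical.arbitrary X) with hq0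
      have hhom : (Fq d 2 : FreeGroup X →* _)
          = (zpowersHom _ (FreeGroup.of q0)).comp
            (FreeGroup.lift fun _ : X => Multiplicative.ofAdd (1 : ℤ)) := by
        apply FreeGroup.ext_hom
        intro x
        show FreeGroup.map _ (FreeGroup.of x) = _
        rw [FreeGroup.map.of]
        have hx : Quot.mk (fun x y : X => d x y < 2) x = q0 := by
          rw [hq0]
          exact Quot.sound (lt_of_le_of_lt (hdiam x _) (by norm_num))
        rw [hx]
        simp
      have hlift : (FreeGroup.lift fun _ : X => Multiplicative.ofAdd (1 : ℤ)) v
          = (FreeGroup.lift fun _ : X => Multiplicative.ofAdd (1 : ℤ)) w :=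
        Multiplicative.toAdd.injective hα
      have hv : Fq d 2 v = (zpowersHom _ (FreeGroup.of q0))
          ((FreeGroup.lift fun _ : X => Multiplicative.ofAdd (1 : ℤ)) v) := by
        rw [hhom]; rfl
      have hw : Fq d 2 w = (zpowersHom _ (FreeGroup.of q0))
          ((FreeGroup.lift fun _ : X => Multiplicative.ofAdd (1 : ℤ)) w) := by
        rw [hhom]; rfl
      rw [hv, hw, hlift]
    refine le_csInf ⟨2, by norm_num, h2⟩ ?_
    rintro b ⟨hb0, hbq⟩
    exact aux_key d hd hb0 hbq
  · rw [dHat, if_neg hα]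
    set L1 := v.toWord with hL1
    set L2 := w.toWord with hL2
    set A : List (Letter X) := L1.map some with hA
    set C : List (Letter X) := L2.map some with hC
    set E1 : List (Letter X) := L1.map (fun _ => eL) with hE1
    set E2 : List (Letter X) := L2.map (fun _ => eL) with hE2
    have hredv : red (A ++ E2) = v := by
      rw [aux_red_append, hA, aux_red_map_some, hL1, FreeGroup.mk_toWord, hE2,
        aux_red_eL, mul_one]
    have hredw : red (E1 ++ C) = w := by
      rw [aux_red_append, hC, aux_red_map_some, hL2, FreeGroup.mk_toWord, hE1,
        aux_red_eL, one_mul]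
    have hlen : (A ++ E2).length = (E1 ++ C).length := by
      simp [hA, hC, hE1, hE2]
    have hmem : rho (extOne d) (A ++ E2) (E1 ++ C) ∈
        {s : ℝ | ∃ w' v' : List (Letter X), w'.length = v'.length ∧
          red w' = v ∧ red v' = w ∧ s = rho (extOne d) w' v'} :=
      ⟨A ++ E2, E1 ++ C, hlen, hredv, hredw, rfl⟩
    refine le_trans (csInf_le (aux_bddBelow _ _ _) hmem) ?_
    show (List.zipWith (extOne d) (A ++ E2) (E1 ++ C)).foldr max 0 ≤ 1
    rw [List.zipWith_append (by simp [hA, hE1])]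
    refine aux_foldr_max_le zero_le_one ?_
    intro x hx
    simp only [List.mem_append] at hx
    rcases hx with hx | hx
    · rw [hA, hE1, aux_zipWith_map_same] at hx
      obtain ⟨⟨y, b⟩, -, rfl⟩ := List.mem_map.mp hx
      cases b <;> exact le_refl 1
    · rw [hE2, hC, aux_zipWith_map_same] at hx
      obtain ⟨⟨y, b⟩, -, rfl⟩ := List.mem_map.mp hx
      cases b <;> exact le_refl 1


end GraevStmt
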